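/- Let D be a principal ideal domain and B ∈ M_n(D) with minimal polynomial μ_B ∈ D[X]. Then for all but finitely many prime elements p ∈ D (up to associates) and all t ≥ 1, N_{(p^t)}(B) = μ_B·D[X] + p^t·D[X]. -/

import Mathlib

open Polynomial

/-! The subalgebra `D[B]` is a submodule of the finitely generated `D`-module `M_n(D)`, so the
torsion of `M_n(D) ⧸ D[B]` is killed by a single `d ≠ 0`. For `p ∤ d`, `f(B) = p^t Z` forces
`Z = g(B)` for some `g`, so `f - p^t g` vanishes at `B`. Since `μ_B` is monic, divisibility by it
can be tested over the fraction field, where `μ_B` generates the kernel of evaluation at `B`. -/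

theorem Submodule.exists_ne_zero_forall_mem_torsion_smul_eq_zero {R M : Type*} [CommRing R]
    [IsDomain R] [IsNoetherianRing R] [AddCommGroup M] [Module R M] [Module.Finite R M] :
    ∃ d : R, d ≠ 0 ∧ ∀ x ∈ torsion R M, d • x = 0 := by
  obtain ⟨d, hann, hd⟩ :=
    annihilator_top_inter_nonZeroDivisors (torsion_isTorsion (R := R) (M := M))
  exact ⟨d, nonZeroDivisors.ne_zero hd, fun x hx =>
    congrArg Subtype.val (mem_annihilator.mp hann ⟨x, hx⟩ mem_top)⟩

theorem Submodule.exists_ne_zero_forall_isCoprime_mem_of_smul_mem {R M : Type*} [CommRing R]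
    [IsDomain R] [IsNoetherianRing R] [AddCommGroup M] [Module R M] [Module.Finite R M]
    (N : Submodule R M) :
    ∃ d : R, d ≠ 0 ∧ ∀ a : R, a ≠ 0 → IsCoprime a d → ∀ z : M, a • z ∈ N → z ∈ N := by
  obtain ⟨d, hd0, hd⟩ := exists_ne_zero_forall_mem_torsion_smul_eq_zero (R := R) (M := M ⧸ N)
  refine ⟨d, hd0, fun a ha ⟨u, v, huv⟩ z haz => ?_⟩
  have haz' : a • N.mkQ z = 0 := (Quotient.mk_eq_zero N).mpr haz
  have hdz : d • N.mkQ z = 0 :=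
    hd _ (mem_torsion_iff _ |>.mpr ⟨⟨a, mem_nonZeroDivisors_of_ne_zero ha⟩, haz'⟩)
  rw [← Quotient.mk_eq_zero, ← one_smul R (Quotient.mk z), ← huv]
  change (u * a + v * d) • N.mkQ z = 0
  rw [add_smul, mul_smul, mul_smul, haz', hdz, smul_zero, smul_zero, add_zero]

theorem Matrix.forall_dvd_apply_iff_exists_eq_smul {R m n : Type*} [Semigroup R] (a : R)
    (A : Matrix m n R) : (∀ i j, a ∣ A i j) ↔ ∃ Z : Matrix m n R, A = a • Z := by
  refine ⟨fun h => ?_, ?_⟩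
  · choose Z hZ using h
    exact ⟨Matrix.of Z, Matrix.ext hZ⟩
  · rintro ⟨Z, rfl⟩ i j
    exact Dvd.intro _ rfl

section MinimalPolynomial

variable {D K : Type*} [CommRing D] [Field K] [Algebra D K] [FaithfulSMul D K]
  {n : Type*} [Fintype n] [DecidableEq n] {B : Matrix n n D} {μ : D[X]}

theorem Matrix.monic_of_map_eq_minpoly
    (hμ : μ.map (algebraMap D K) = minpoly K (B.map (algebraMap D K))) : μ.Monic :=
  monic_of_injective (FaithfulSMul.algebraMap_injective D K)
    (hμ ▸ minpoly.monic (Algebra.IsIntegral.isIntegral _))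

theorem Matrix.aeval_eq_zero_iff_dvd_of_map_eq_minpoly
    (hμ : μ.map (algebraMap D K) = minpoly K (B.map (algebraMap D K))) (q : D[X]) :
    aeval B q = 0 ↔ μ ∣ q := by
  have hinj := FaithfulSMul.algebraMap_injective D K
  have hmap : aeval (B.map (algebraMap D K)) (q.map (algebraMap D K)) =
      (aeval B q).map (algebraMap D K) := by
    rw [aeval_map_algebraMap]
    exact aeval_algHom_apply (Algebra.ofId D K).mapMatrix B q
  rw [← map_dvd_map _ hinj (monic_of_map_eq_minpoly hμ), hμ, minpoly.dvd_iff, hmap]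
  exact ((Matrix.map_injective hinj).eq_iff' (Matrix.map_zero _ (map_zero _))).symm

end MinimalPolynomial

theorem stmt15_general (D : Type*) [CommRing D] [IsDomain D] [IsPrincipalIdealRing D]
    (n : ℕ) (B : Matrix (Fin n) (Fin n) D)
    (μD : Polynomial D)
    (hμ : μD.map (algebraMap D (FractionRing D)) =
      minpoly (FractionRing D) (B.map (algebraMap D (FractionRing D)))) :
    ∃ S : Finset D, ∀ p : D, Prime p → (∀ q ∈ S, ¬ Associated p q) →
      ∀ t : ℕ, 1 ≤ t → ∀ f : Polynomial D,
        (∀ i j, p ^ t ∣ Polynomial.aeval B f i j) ↔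
          ∃ g h : Polynomial D, f = g * μD + Polynomial.C (p ^ t) * h := by
  classical
  have hker := Matrix.aeval_eq_zero_iff_dvd_of_map_eq_minpoly hμ
  obtain ⟨d, hd0, hd⟩ := Submodule.exists_ne_zero_forall_isCoprime_mem_of_smul_mem
    (LinearMap.range (aeval (R := D) B).toLinearMap)
  refine ⟨(UniqueFactorizationMonoid.factors d).toFinset, fun p hp hpS t _ f => ?_⟩
  have hpd : IsCoprime (p ^ t) d := by
    refine (hp.coprime_iff_not_dvd.mpr fun hdvd => ?_).pow_left
    obtain ⟨q, hq, hpq⟩ :=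
      UniqueFactorizationMonoid.exists_mem_factors_of_dvd hd0 hp.irreducible hdvd
    exact hpS q (Multiset.mem_toFinset.mpr hq) hpq
  rw [Matrix.forall_dvd_apply_iff_exists_eq_smul]
  constructor
  · rintro ⟨Z, hZ⟩
    obtain ⟨g, hg⟩ := hd _ (pow_ne_zero t hp.ne_zero) hpd Z (hZ ▸ ⟨f, rfl⟩)
    obtain ⟨k, hk⟩ := (hker (f - C (p ^ t) * g)).mp <| by
      rw [map_sub, map_mul, aeval_C, ← Algebra.smul_def, hZ, ← hg, AlgHom.toLinearMap_apply,
        sub_self]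
    exact ⟨k, g, by rw [mul_comm, ← hk, sub_add_cancel]⟩
  · rintro ⟨g, h, rfl⟩
    refine ⟨aeval B h, ?_⟩
    rw [map_add, map_mul, map_mul, (hker μD).mpr dvd_rfl, mul_zero, zero_add, aeval_C,
      Algebra.smul_def]

theorem stmt15 (D : Type*) [CommRing D] [IsDomain D] [IsPrincipalIdealRing D]
    (n : ℕ) (hn : 0 < n) (B : Matrix (Fin n) (Fin n) D)
    (μD : Polynomial D)
    (hμ : μD.map (algebraMap D (FractionRing D)) =
      minpoly (FractionRing D) (B.map (algebraMap D (FractionRing D)))) :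
    ∃ S : Finset D, ∀ p : D, Prime p → (∀ q ∈ S, ¬ Associated p q) →
      ∀ t : ℕ, 1 ≤ t → ∀ f : Polynomial D,
        (∀ i j, p ^ t ∣ Polynomial.aeval B f i j) ↔
          ∃ g h : Polynomial D, f = g * μD + Polynomial.C (p ^ t) * h :=
  stmt15_general D n B μD hμ
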